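/- Let μ be a partition of n+k with h rows and largest part μ₁, let (i,j) ∈ μ, and fix pairwise distinct rationals α₁,…,α_h and pairwise distinct rationals β₁,…,β_{μ₁}. For each tableau T obtained by filling n of the cells of μ bijectively with 1,…,n in such a way that the k empty cells all lie in the shadow of (i,j), define the point (a(T),b(T)) ∈ ℚ^{2n} by a_m(T) = α_{r+1} and b_m(T) = β_{c+1} whenever entry m occupies cell (r,c) of T. If P ∈ ℚ[X_n,Y_n] vanishes at (a(T),b(T)) for every such tableau T, then gr(P)(∂) annihilates every element of M^k_{i,j}(X,Y), where gr(P) denotes the homogeneous component of P of degree equal to the total degree of P. -/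

import Mathlib

open MvPolynomial

noncomputable section

/-- The monomial differential operator `∂^m` applied to a polynomial `Q`:
if `m = (m_v)_v`, this is `∏_v (∂/∂x_v)^{m_v}` applied to `Q`. -/
def monDiff {σ : Type*} [DecidableEq σ] (m : σ →₀ ℕ) (Q : MvPolynomial σ ℚ) :
    MvPolynomial σ ℚ :=
  ∑ a ∈ Q.support,
    MvPolynomial.monomial (a - m) (Q.coeff a * ∏ v ∈ m.support, ((a v).descFactorial (m v) : ℚ))

/-- The differential operator `P(∂)` applied to `Q`. -/
def applyDiff {σ : Type*} [DecidableEq σ] (P Q : MvPolynomial σ ℚ) : MvPolynomial σ ℚ :=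
  ∑ m ∈ P.support, P.coeff m • monDiff m Q

/-- The linear span of `Q` and all its partial derivatives (of all orders),
i.e. the space `L_∂[Q]`. -/
def derivSpan {σ : Type*} [DecidableEq σ] (Q : MvPolynomial σ ℚ) :
    Submodule ℚ (MvPolynomial σ ℚ) :=
  Submodule.span ℚ {R | ∃ m : σ →₀ ℕ, R = monDiff m Q}

/-- Strict pseudo-lexicographic order: compare second coordinates first. -/
def plexLT {α : Type*} [LinearOrder α] (a b : α × α) : Prop :=
  a.2 < b.2 ∨ (a.2 = b.2 ∧ a.1 < b.1)

/-- Pseudo-lexicographic order on `ℕ × ℕ`. -/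
def plexLE (a b : ℕ × ℕ) : Prop :=
  a.2 < b.2 ∨ (a.2 = b.2 ∧ a.1 ≤ b.1)

instance : DecidableRel plexLE := fun a b => by unfold plexLE; exact inferInstance
instance : IsTrans (ℕ × ℕ) plexLE := ⟨by intro a b c hab hbc; unfold plexLE at *; omega⟩
instance : IsAntisymm (ℕ × ℕ) plexLE := ⟨by
  intro a b hab hba
  unfold plexLE at hab hba
  have h1 : a.1 = b.1 := by omega
  have h2 : a.2 = b.2 := by omega
  exact Prod.ext h1 h2⟩
instance : IsTotal (ℕ × ℕ) plexLE := ⟨by intro a b; unfold plexLE; omega⟩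

/-- Lexicographic order on `ℕ × ℕ`: compare first coordinates first. -/
def lexLE (a b : ℕ × ℕ) : Prop :=
  a.1 < b.1 ∨ (a.1 = b.1 ∧ a.2 ≤ b.2)

/-- Strict lexicographic order on `ℕ × ℕ`. -/
def lexLT (a b : ℕ × ℕ) : Prop :=
  a.1 < b.1 ∨ (a.1 = b.1 ∧ a.2 < b.2)

instance : DecidableRel lexLE := fun a b => by unfold lexLE; exact inferInstance
instance : IsTrans (ℕ × ℕ) lexLE := ⟨by intro a b c hab hbc; unfold lexLE at *; omega⟩
instance : IsAntisymm (ℕ × ℕ) lexLE := ⟨by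
  intro a b hab hba
  unfold lexLE at hab hba
  have h1 : a.1 = b.1 := by omega
  have h2 : a.2 = b.2 := by omega
  exact Prod.ext h1 h2⟩
instance : IsTotal (ℕ × ℕ) lexLE := ⟨by intro a b; unfold lexLE; omega⟩

/-- The lattice determinant of a list of `n` biexponents:
`Δ = det(x_i^{p_j} y_i^{q_j})`, in the ring `ℚ[x_1,…,x_n,y_1,…,y_n]`,
where `Sum.inl i` stands for `x_{i+1}` and `Sum.inr i` for `y_{i+1}`. -/
def deltaOfList (n : ℕ) (L : Fin n → ℕ × ℕ) : MvPolynomial (Fin n ⊕ Fin n) ℚ :=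
  Matrix.det (Matrix.of fun i j : Fin n =>
    X (Sum.inl i) ^ (L j).1 * X (Sum.inr i) ^ (L j).2)

/-- The lattice determinant of a lattice diagram (finite set of cells), the cells
being listed in increasing pseudo-lexicographic order; `0` if the diagram does not
have exactly `n` cells. -/
def deltaOfFinset (n : ℕ) (D : Finset (ℕ × ℕ)) : MvPolynomial (Fin n ⊕ Fin n) ℚ :=
  if h : D.card = n then
    deltaOfList n fun i => (D.sort plexLE).get ⟨i.1, by rw [Finset.length_sort, h]; exact i.2⟩
  else 0

open scoped Classical in
/-- The lattice determinant of a list of integer biexponents: `0` if some coordinate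
is negative (and `0` if two biexponents coincide, since then the determinant has two
equal columns). -/
def deltaOfListZ (n : ℕ) (L : Fin n → ℤ × ℤ) : MvPolynomial (Fin n ⊕ Fin n) ℚ :=
  if ∀ j, 0 ≤ (L j).1 ∧ 0 ≤ (L j).2 then
    deltaOfList n fun j => ((L j).1.toNat, (L j).2.toNat)
  else 0

/-- The Ferrers diagram of a partition with `h` rows and parts `μ 0 ≥ μ 1 ≥ …`:
the set of cells `(r, c)` with `r < h` and `c < μ r`. -/
def ferrers (h : ℕ) (μ : ℕ → ℕ) : Finset (ℕ × ℕ) :=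
  (Finset.range h ×ˢ Finset.range (μ 0)).filter fun rc => rc.2 < μ rc.1

/-- The shadow of the cell `(i, j)` in the diagram `F`. -/
def shadowF (F : Finset (ℕ × ℕ)) (i j : ℕ) : Finset (ℕ × ℕ) :=
  F.filter fun c => i ≤ c.1 ∧ j ≤ c.2

/-- The space `M^k_{i,j}(X,Y)`: the sum of the spaces `M_{μ/S}` over all `k`-element
subsets `S` of the shadow of `(i,j)` in the diagram `F` (of a partition of `n + k`). -/
def Mk (n k : ℕ) (F : Finset (ℕ × ℕ)) (i j : ℕ) :
    Submodule ℚ (MvPolynomial (Fin n ⊕ Fin n) ℚ) :=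
  ⨆ S ∈ Finset.powersetCard k (shadowF F i j), derivSpan (deltaOfFinset n (F \ S))

/-- The submodule of polynomials involving only the `x` variables
(elements of `Y`-degree `0`). -/
def onlyX (n : ℕ) : Submodule ℚ (MvPolynomial (Fin n ⊕ Fin n) ℚ) :=
  Subalgebra.toSubmodule (MvPolynomial.supported ℚ (Set.range Sum.inl))

/-- The space `M^k_{i,j}(X)`: the elements of `M^k_{i,j}(X,Y)` of `Y`-degree 0. -/
def MkX (n k : ℕ) (F : Finset (ℕ × ℕ)) (i j : ℕ) :
    Submodule ℚ (MvPolynomial (Fin n ⊕ Fin n) ℚ) :=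
  Mk n k F i j ⊓ onlyX n

end

/-!
For `R` of total degree at most `deg Δ_L`, the apolar pairing `⟨R, Δ_L⟩ = (R(∂) Δ_L)(0)` is a
linear combination of values of `R` on the grid `{(α r, β c)}`: a tensor product of divided
differences extracts a coefficient from any polynomial of bounded degree, and `Δ_L` is an
alternating sum of monomials. The weight of a grid point is a determinant, which vanishes unless
the point comes from an injective filling `T` that a permutation makes cellwise dominated by the
cells of `μ/S`. Such a `T` lies in `μ` and, by counting in the lower set `μ ∖ shadow`, leaves only
shadow cells empty, so `⟨R, Δ_{μ/S}⟩ = 0` whenever `R` vanishes on the orbit points. Applied to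
`R = x^c P`, and since only the degree of `Δ` pairs nontrivially, this kills every coefficient of
`gr(P)(∂) ∂^m Δ_{μ/S}`.
-/

open MvPolynomial Finset

noncomputable section

section DifferentialOperators

variable {σ : Type*} [DecidableEq σ]

theorem coeff_monDiff (m : σ →₀ ℕ) (Q : MvPolynomial σ ℚ) (c : σ →₀ ℕ) :
    coeff c (monDiff m Q)
      = Q.coeff (c + m) * ∏ v ∈ m.support, ((c v + m v).descFactorial (m v) : ℚ) := by
  rw [monDiff, coeff_sum, sum_eq_single (c + m)]
  · rw [add_tsub_cancel_right, coeff_monomial, if_pos rfl]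
    rfl
  · intro a _ hne
    rw [coeff_monomial]
    split_ifs with hac
    · have hnle : ¬ m ≤ a := fun hle => hne (by rw [← hac, tsub_add_cancel_of_le hle])
      obtain ⟨v, hv⟩ : ∃ v, a v < m v := by simpa [Finsupp.le_def] using hnle
      have hvm : v ∈ m.support := Finsupp.mem_support_iff.2 (by omega)
      rw [prod_eq_zero hvm (by rw [Nat.cast_eq_zero, Nat.descFactorial_eq_zero_iff_lt]; exact hv),
        mul_zero]
    · rfl
  · intro hns
    rw [notMem_support_iff.1 hns, zero_mul, add_tsub_cancel_right, monomial_zero, coeff_zero]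

theorem monDiff_add (m : σ →₀ ℕ) (Q Q' : MvPolynomial σ ℚ) :
    monDiff m (Q + Q') = monDiff m Q + monDiff m Q' := by
  ext c
  simp only [coeff_add, coeff_monDiff, add_mul]

theorem monDiff_smul (m : σ →₀ ℕ) (r : ℚ) (Q : MvPolynomial σ ℚ) :
    monDiff m (r • Q) = r • monDiff m Q := by
  ext c
  simp only [coeff_smul, coeff_monDiff, smul_eq_mul, mul_assoc]

def monDiffLinear (m : σ →₀ ℕ) : MvPolynomial σ ℚ →ₗ[ℚ] MvPolynomial σ ℚ where
  toFun := monDiff m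
  map_add' := monDiff_add m
  map_smul' := monDiff_smul m

def applyDiffLinear (W : MvPolynomial σ ℚ) : MvPolynomial σ ℚ →ₗ[ℚ] MvPolynomial σ ℚ :=
  ∑ m ∈ W.support, W.coeff m • monDiffLinear m

theorem applyDiffLinear_apply (W Q : MvPolynomial σ ℚ) :
    applyDiffLinear W Q = applyDiff W Q := by
  simp [applyDiffLinear, applyDiff, monDiffLinear]

end DifferentialOperators

section Apolar

variable {σ : Type*} [Fintype σ]

def expFactorial (a : σ →₀ ℕ) : ℚ := ∏ v, ((a v).factorial : ℚ)

theorem expFactorial_ne_zero (a : σ →₀ ℕ) : expFactorial a ≠ 0 :=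
  prod_ne_zero_iff.2 fun _ _ => Nat.cast_ne_zero.2 (Nat.factorial_ne_zero _)

/-- The apolar pairing `⟨P, Q⟩ = (P(∂) Q)(0)`. -/
def apolar (P Q : MvPolynomial σ ℚ) : ℚ :=
  ∑ a ∈ P.support, P.coeff a * Q.coeff a * expFactorial a

theorem apolar_eq_sum_of_support_subset {P : MvPolynomial σ ℚ} {s : Finset (σ →₀ ℕ)}
    (hs : P.support ⊆ s) (Q : MvPolynomial σ ℚ) :
    apolar P Q = ∑ a ∈ s, P.coeff a * Q.coeff a * expFactorial a :=
  sum_subset hs fun a _ ha => by rw [notMem_support_iff.1 ha, zero_mul, zero_mul]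

theorem apolar_sum_right {ι : Type*} (s : Finset ι) (R : MvPolynomial σ ℚ)
    (Q : ι → MvPolynomial σ ℚ) : apolar R (∑ t ∈ s, Q t) = ∑ t ∈ s, apolar R (Q t) := by
  simp only [apolar, coeff_sum, mul_sum, sum_mul]
  exact sum_comm

theorem apolar_homogeneousComponent {Q : MvPolynomial σ ℚ} {D : ℕ} (hQ : Q.IsHomogeneous D)
    (d : ℕ) (P : MvPolynomial σ ℚ) :
    apolar (homogeneousComponent d P) Q = if d = D then apolar P Q else 0 := by
  rw [apolar_eq_sum_of_support_subset
    ((support_homogeneousComponent d P).trans_subset (filter_subset _ _))]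
  split_ifs with hdD
  · refine sum_congr rfl fun a _ => ?_
    rw [coeff_homogeneousComponent]
    split_ifs with ha
    · rfl
    · rw [hQ.coeff_eq_zero (hdD ▸ ha), mul_zero, zero_mul, mul_zero, zero_mul]
  · refine sum_eq_zero fun a _ => ?_
    rw [coeff_homogeneousComponent]
    split_ifs with ha
    · rw [hQ.coeff_eq_zero (ha ▸ hdD), mul_zero, zero_mul]
    · rw [zero_mul, zero_mul]

variable [DecidableEq σ]

theorem coeff_monDiff_mul_expFactorial (m : σ →₀ ℕ) (Q : MvPolynomial σ ℚ) (c : σ →₀ ℕ) :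
    coeff c (monDiff m Q) * expFactorial c = Q.coeff (c + m) * expFactorial (c + m) := by
  have hdesc : ∏ v ∈ m.support, ((c v + m v).descFactorial (m v) : ℚ)
      = ∏ v, ((c v + m v).descFactorial (m v) : ℚ) :=
    prod_subset (subset_univ _) fun v _ hv => by simp [Finsupp.notMem_support_iff.1 hv]
  rw [coeff_monDiff, hdesc, mul_assoc, expFactorial, expFactorial, ← prod_mul_distrib]
  congr 1
  refine prod_congr rfl fun v _ => ?_
  rw [Finsupp.add_apply, ← Nat.factorial_mul_descFactorial (Nat.le_add_left (m v) (c v)),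
    Nat.add_sub_cancel]
  push_cast
  ring

theorem apolar_monomial_right (R : MvPolynomial σ ℚ) (e : σ →₀ ℕ) (r : ℚ) :
    apolar R (monomial e r) = R.coeff e * r * expFactorial e := by
  rw [apolar_eq_sum_of_support_subset (subset_insert e R.support), sum_eq_single_of_mem e
    (mem_insert_self _ _) fun a _ hae => by rw [coeff_monomial, if_neg (Ne.symm hae)]; ring,
    coeff_monomial, if_pos rfl]

theorem apolar_monomial_mul (c : σ →₀ ℕ) (W Q : MvPolynomial σ ℚ) :
    apolar (monomial c 1 * W) Q
      = ∑ m ∈ W.support, W.coeff m * Q.coeff (c + m) * expFactorial (c + m) := by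
  have hsupp : (monomial c 1 * W).support ⊆ W.support.image (c + ·) := by
    intro a ha
    rw [mem_support_iff, coeff_monomial_mul'] at ha
    split_ifs at ha with hca
    · exact mem_image.2 ⟨a - c, mem_support_iff.2 (by simpa using ha), add_tsub_cancel_of_le hca⟩
    · exact absurd rfl ha
  rw [apolar_eq_sum_of_support_subset hsupp, sum_image fun _ _ _ _ h => add_left_cancel h]
  simp only [coeff_monomial_mul, one_mul]

theorem coeff_applyDiff_mul_expFactorial (W Q : MvPolynomial σ ℚ) (c : σ →₀ ℕ) :
    coeff c (applyDiff W Q) * expFactorial c = apolar (monomial c 1 * W) Q := by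
  rw [apolar_monomial_mul, applyDiff, coeff_sum, sum_mul]
  refine sum_congr rfl fun m _ => ?_
  rw [coeff_smul, smul_eq_mul, mul_assoc, coeff_monDiff_mul_expFactorial, mul_assoc]

theorem applyDiff_eq_zero_of_forall_apolar {W Q : MvPolynomial σ ℚ}
    (H : ∀ c, apolar (monomial c 1 * W) Q = 0) : applyDiff W Q = 0 :=
  eq_zero_iff.2 fun c => (mul_eq_zero.1 ((coeff_applyDiff_mul_expFactorial W Q c).trans
    (H c))).resolve_right (expFactorial_ne_zero c)

theorem apolar_monDiff (R Q : MvPolynomial σ ℚ) (m : σ →₀ ℕ) :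
    apolar R (monDiff m Q) = apolar (monomial m 1 * R) Q := by
  rw [apolar_monomial_mul, apolar]
  refine sum_congr rfl fun b _ => ?_
  rw [mul_assoc, coeff_monDiff_mul_expFactorial, add_comm m b, mul_assoc]

end Apolar

theorem prod_eq_ite_of_degree_le {M σ : Type*} [CommMonoidWithZero M] [Fintype σ]
    [DecidableEq σ] {a e : σ →₀ ℕ} (u : σ → ℕ → M)
    (hu : ∀ v t, t ≤ e v → u v t = if t = e v then 1 else 0) (hdeg : a.degree ≤ e.degree) :
    ∏ v, u v (a v) = if a = e then 1 else 0 := by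
  split_ifs with hae
  · subst hae
    exact prod_eq_one fun v _ => by rw [hu v _ le_rfl, if_pos rfl]
  by_cases hlt : ∃ v, a v < e v
  · obtain ⟨v, hv⟩ := hlt
    exact prod_eq_zero (mem_univ v) (by rw [hu v _ hv.le, if_neg hv.ne])
  · push Not at hlt
    rw [Finsupp.degree_eq_sum, Finsupp.degree_eq_sum] at hdeg
    have hsum := (sum_eq_sum_iff_of_le fun v _ => hlt v).1
      (le_antisymm (sum_le_sum fun v _ => hlt v) hdeg)
    exact absurd (Finsupp.ext fun v => (hsum v (mem_univ v)).symm) hae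

section DividedDifferences

variable {K : Type*} [Field K]

/-- `∑ r, divDiffWeight γ e r * f r` is the divided difference `f[γ 0, …, γ e]`: the leading
coefficient of the polynomial of degree `≤ e` interpolating `f` at the nodes `γ 0, …, γ e`. -/
def divDiffWeight (γ : ℕ → K) (e r : ℕ) : K :=
  if r ≤ e then (Lagrange.basis (range (e + 1)) γ r).coeff e else 0

theorem divDiffWeight_eq_zero_of_lt (γ : ℕ → K) {e r : ℕ} (h : e < r) :
    divDiffWeight γ e r = 0 :=
  if_neg (not_le.2 h)

theorem sum_divDiffWeight_mul_pow {γ : ℕ → K} {N e t : ℕ} (hγ : Set.InjOn γ (Set.Iio N))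
    (he : e < N) (ht : t ≤ e) :
    ∑ r ∈ range N, divDiffWeight γ e r * γ r ^ t = if t = e then 1 else 0 := by
  have hinj : Set.InjOn γ (range (e + 1)) :=
    hγ.mono fun r hr => by simp only [coe_range, Set.mem_Iio] at hr ⊢; omega
  have hinterp := Lagrange.eq_interpolate hinj (f := Polynomial.X ^ t)
    (by rw [Polynomial.degree_X_pow, card_range]; exact_mod_cast Nat.lt_succ_of_le ht)
  rw [← sum_subset (range_subset_range.2 he) fun r _ hr =>
      by rw [divDiffWeight_eq_zero_of_lt γ (by simpa using hr), zero_mul]]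
  calc ∑ r ∈ range (e + 1), divDiffWeight γ e r * γ r ^ t
      = (Lagrange.interpolate (range (e + 1)) γ fun r => (Polynomial.X ^ t).eval (γ r)).coeff e :=
        by
        rw [Lagrange.interpolate_apply, Polynomial.finsetSum_coeff]
        refine sum_congr rfl fun r hr => ?_
        rw [divDiffWeight, if_pos (Nat.lt_succ_iff.1 (mem_range.1 hr)), Polynomial.coeff_C_mul,
          Polynomial.eval_pow, Polynomial.eval_X, mul_comm]
    _ = if t = e then 1 else 0 := by
        rw [← hinterp, Polynomial.coeff_X_pow]
        exact if_congr eq_comm rfl rfl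

end DividedDifferences

theorem coeff_eq_sum_eval {K σ : Type*} [Field K] [Fintype σ] [DecidableEq σ]
    {γ : σ → ℕ → K} {N : σ → ℕ} (hγ : ∀ v, Set.InjOn (γ v) (Set.Iio (N v)))
    {e : σ →₀ ℕ} (he : ∀ v, e v < N v) {R : MvPolynomial σ K} (hR : R.totalDegree ≤ e.degree) :
    R.coeff e = ∑ z ∈ Fintype.piFinset fun v => range (N v),
      (∏ v, divDiffWeight (γ v) (e v) (z v)) * eval (fun v => γ v (z v)) R := by
  have hmoment : ∀ a ∈ R.support,
      ∏ v, ∑ r ∈ range (N v), divDiffWeight (γ v) (e v) r * γ v r ^ a v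
        = if a = e then 1 else 0 := fun a ha =>
    prod_eq_ite_of_degree_le _ (fun v t ht => sum_divDiffWeight_mul_pow (hγ v) (he v) ht)
      ((le_totalDegree ha).trans hR)
  calc R.coeff e = ∑ a ∈ R.support, R.coeff a * if a = e then 1 else 0 := by
        rw [sum_eq_single e (fun a _ h => by rw [if_neg h, mul_zero])
          (fun h => by rw [notMem_support_iff.1 h, zero_mul]), if_pos rfl, mul_one]
    _ = ∑ a ∈ R.support, R.coeff a *
          ∏ v, ∑ r ∈ range (N v), divDiffWeight (γ v) (e v) r * γ v r ^ a v :=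
        sum_congr rfl fun a ha => by rw [hmoment a ha]
    _ = _ := by
        simp only [prod_univ_sum, eval_eq', mul_sum, prod_mul_distrib]
        rw [sum_comm]
        refine sum_congr rfl fun z _ => sum_congr rfl fun a _ => ?_
        ring

section LatticeDeterminant

variable {n : ℕ} (L : Fin n → ℕ × ℕ)

/-- The exponent of the term `∏ i, x_{s i} ^ (L i).1 * y_{s i} ^ (L i).2` of `Δ_L`. -/
def latticeExponent (s : Equiv.Perm (Fin n)) : Fin n ⊕ Fin n →₀ ℕ :=
  Finsupp.equivFunOnFinite.symm
    (Sum.elim (fun m => (L (s.symm m)).1) (fun m => (L (s.symm m)).2))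

@[to_additive]
theorem prod_latticeExponent {M : Type*} [CommMonoid M] (s : Equiv.Perm (Fin n))
    (f : Fin n ⊕ Fin n → ℕ → M) :
    ∏ v, f v (latticeExponent L s v)
      = ∏ i, f (Sum.inl (s i)) (L i).1 * f (Sum.inr (s i)) (L i).2 := by
  rw [Fintype.prod_sum_type, prod_mul_distrib, ← Equiv.prod_comp s,
    ← Equiv.prod_comp s fun m => f (Sum.inr m) _]
  simp [latticeExponent]

theorem degree_latticeExponent (s : Equiv.Perm (Fin n)) :
    (latticeExponent L s).degree = ∑ i, ((L i).1 + (L i).2) := by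
  rw [Finsupp.degree_eq_sum]
  exact sum_latticeExponent L s fun _ k => k

theorem expFactorial_latticeExponent (s : Equiv.Perm (Fin n)) :
    expFactorial (latticeExponent L s) = ∏ i, (((L i).1.factorial : ℚ) * (L i).2.factorial) :=
  prod_latticeExponent L s fun _ k => (k.factorial : ℚ)

theorem deltaOfList_eq_sum :
    deltaOfList n L = ∑ s : Equiv.Perm (Fin n),
      monomial (latticeExponent L s) ((Equiv.Perm.sign s : ℤ) : ℚ) := by
  rw [deltaOfList, Matrix.det_apply']
  refine sum_congr rfl fun s _ => ?_
  have hmonomial : monomial (latticeExponent L s) (1 : ℚ) = ∏ v, X v ^ latticeExponent L s v := by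
    rw [← prod_X_pow_eq_monomial]
    exact prod_subset (subset_univ _) fun v _ hv => by
      rw [Finsupp.notMem_support_iff.1 hv, pow_zero]
  rw [← mul_one ((Equiv.Perm.sign s : ℤ) : ℚ), ← C_mul_monomial, map_intCast, hmonomial,
    prod_latticeExponent L s fun v k => X v ^ k]
  rfl

theorem isHomogeneous_deltaOfList :
    (deltaOfList n L).IsHomogeneous (∑ i, ((L i).1 + (L i).2)) := by
  rw [deltaOfList_eq_sum]
  exact IsHomogeneous.sum _ _ _ fun s _ => isHomogeneous_monomial _ (degree_latticeExponent L s)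

def nodeMatrix (α β : ℕ → ℚ) (z : Fin n ⊕ Fin n → ℕ) : Matrix (Fin n) (Fin n) ℚ :=
  Matrix.of fun m i =>
    divDiffWeight α (L i).1 (z (Sum.inl m)) * divDiffWeight β (L i).2 (z (Sum.inr m))

theorem det_nodeMatrix (α β : ℕ → ℚ) (z : Fin n ⊕ Fin n → ℕ) :
    (nodeMatrix L α β z).det = ∑ s : Equiv.Perm (Fin n), ((Equiv.Perm.sign s : ℤ) : ℚ) *
      ∏ v, divDiffWeight (Sum.elim (fun _ => α) (fun _ => β) v) (latticeExponent L s v) (z v) := by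
  rw [Matrix.det_apply']
  refine sum_congr rfl fun s _ => ?_
  rw [prod_latticeExponent L s fun v k =>
    divDiffWeight (Sum.elim (fun _ => α) (fun _ => β) v) k (z v)]
  rfl

theorem apolar_deltaOfList {α β : ℕ → ℚ} {h w : ℕ} (hα : Set.InjOn α (Set.Iio h))
    (hβ : Set.InjOn β (Set.Iio w)) (hL : ∀ i, (L i).1 < h ∧ (L i).2 < w)
    {R : MvPolynomial (Fin n ⊕ Fin n) ℚ} (hR : R.totalDegree ≤ ∑ i, ((L i).1 + (L i).2)) :
    apolar R (deltaOfList n L) = (∏ i, (((L i).1.factorial : ℚ) * (L i).2.factorial)) *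
      ∑ z ∈ Fintype.piFinset (fun v => range (Sum.elim (fun _ => h) (fun _ => w) v)),
        (nodeMatrix L α β z).det *
          eval (fun v => Sum.elim (fun _ => α) (fun _ => β) v (z v)) R := by
  have hcoeff := fun s => coeff_eq_sum_eval (γ := Sum.elim (fun _ => α) (fun _ => β))
    (N := Sum.elim (fun _ => h) (fun _ => w)) (R := R) (e := latticeExponent L s)
    (fun v => by cases v; exacts [hα, hβ])
    (fun v => by cases v <;> simp [latticeExponent, hL])
    (hR.trans_eq (degree_latticeExponent L s).symm)
  simp_rw [deltaOfList_eq_sum, apolar_sum_right, apolar_monomial_right,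
    expFactorial_latticeExponent, hcoeff, det_nodeMatrix, sum_mul, mul_sum]
  rw [sum_comm]
  refine sum_congr rfl fun z _ => sum_congr rfl fun s _ => ?_
  ring

end LatticeDeterminant

theorem injective_of_det_nodeMatrix_ne_zero {n : ℕ} {L : Fin n → ℕ × ℕ} {α β : ℕ → ℚ}
    {z : Fin n ⊕ Fin n → ℕ} (hdet : (nodeMatrix L α β z).det ≠ 0) :
    Function.Injective fun m => (z (Sum.inl m), z (Sum.inr m)) := by
  intro m₁ m₂ hm
  by_contra hne
  obtain ⟨h₁, h₂⟩ := Prod.mk.inj hm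
  exact hdet (Matrix.det_zero_of_row_eq hne (funext fun i => by simp [nodeMatrix, h₁, h₂]))

theorem exists_perm_le_of_det_nodeMatrix_ne_zero {n : ℕ} {L : Fin n → ℕ × ℕ} {α β : ℕ → ℚ}
    {z : Fin n ⊕ Fin n → ℕ} (hdet : (nodeMatrix L α β z).det ≠ 0) :
    ∃ s : Equiv.Perm (Fin n), ∀ i, (z (Sum.inl (s i)), z (Sum.inr (s i))) ≤ L i := by
  rw [Matrix.det_apply'] at hdet
  obtain ⟨s, -, hs⟩ := exists_ne_zero_of_sum_ne_zero hdet
  refine ⟨s, fun i => ?_⟩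
  have hi := prod_ne_zero_iff.1 (right_ne_zero_of_mul hs) i (mem_univ i)
  simp only [nodeMatrix, Matrix.of_apply] at hi
  exact ⟨not_lt.1 fun hlt => hi (by rw [divDiffWeight_eq_zero_of_lt α hlt, zero_mul]),
    not_lt.1 fun hlt => hi (by rw [divDiffWeight_eq_zero_of_lt β hlt, mul_zero])⟩

theorem subset_range_of_le_perm {ι α : Type*} [Fintype ι] [Preorder α] [DecidableEq α]
    {A : Finset α} (hA : IsLowerSet (A : Set α)) {L T : ι → α} (hL : Function.Injective L)
    (hT : Function.Injective T) (hAL : ∀ a ∈ A, a ∈ Set.range L) (s : Equiv.Perm ι)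
    (hle : ∀ i, T (s i) ≤ L i) : ∀ a ∈ A, a ∈ Set.range T := by
  set I := univ.filter fun i => L i ∈ A
  have hIL : I.image L = A := by
    ext a
    simp only [I, mem_image, mem_filter, mem_univ, true_and]
    refine ⟨fun ⟨i, hi, hia⟩ => hia ▸ hi, fun ha => ?_⟩
    obtain ⟨i, rfl⟩ := hAL a ha
    exact ⟨i, ha, rfl⟩
  have hIT : I.image (T ∘ s) ⊆ A := fun a ha => by
    obtain ⟨i, hi, rfl⟩ := mem_image.1 ha
    exact hA (hle i) (mem_filter.1 hi).2
  have hcard : A.card ≤ (I.image (T ∘ s)).card := by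
    rw [← hIL, card_image_of_injective _ hL, card_image_of_injective _ (hT.comp s.injective)]
  intro a ha
  obtain ⟨i, -, hi⟩ := mem_image.1 ((eq_of_subset_of_card_le hIT hcard).symm ▸ ha)
  exact ⟨s i, hi⟩

theorem isLowerSet_ferrers {h : ℕ} {μ : ℕ → ℕ} (hμ : Antitone μ) :
    IsLowerSet (ferrers h μ : Set (ℕ × ℕ)) := by
  rintro ⟨r, c⟩ ⟨r', c'⟩ hle hmem
  obtain ⟨hr, hc⟩ := Prod.mk_le_mk.1 hle
  simp only [ferrers, coe_filter, mem_product, mem_range, Set.mem_ofPred_eq] at hmem ⊢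
  have := hμ hr
  omega

theorem isLowerSet_sdiff_shadowF {F : Finset (ℕ × ℕ)} (hF : IsLowerSet (F : Set (ℕ × ℕ)))
    (i j : ℕ) : IsLowerSet ((F \ shadowF F i j : Finset (ℕ × ℕ)) : Set (ℕ × ℕ)) := by
  rintro a b hba ha
  simp only [shadowF, coe_sdiff, coe_filter, Set.mem_sdiff, mem_coe, Set.mem_ofPred_eq,
    not_and] at ha ⊢
  exact ⟨hF hba ha.1, fun _ hi hj => ha.2 ha.1 (hi.trans hba.1) (hj.trans hba.2)⟩

theorem exists_deltaOfFinset_eq_deltaOfList {n : ℕ} {D : Finset (ℕ × ℕ)} (hD : D.card = n) :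
    ∃ L : Fin n → ℕ × ℕ, Function.Injective L ∧ Set.range L = D ∧
      deltaOfFinset n D = deltaOfList n L := by
  refine ⟨_, fun a b hab => ?_, ?_, dif_pos hD⟩
  · exact Fin.ext (Fin.mk.inj ((D.sort_nodup plexLE).get_inj_iff.1 hab))
  · ext z
    simp only [Set.mem_range, mem_coe, ← mem_sort plexLE, List.mem_iff_get]
    have hlen : (D.sort plexLE).length = n := by rw [length_sort, hD]
    exact ⟨fun ⟨i, hi⟩ => ⟨_, hi⟩, fun ⟨i, hi⟩ => ⟨⟨i, hlen ▸ i.2⟩, hi⟩⟩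

theorem apolar_homogeneousComponent_deltaOfFinset_eq_zero {n h w i j d : ℕ}
    {F D : Finset (ℕ × ℕ)} (hF : IsLowerSet (F : Set (ℕ × ℕ)))
    (hFbox : ∀ c ∈ F, c.1 < h ∧ c.2 < w) (hDF : D ⊆ F) (hFD : F \ shadowF F i j ⊆ D)
    {α β : ℕ → ℚ} (hα : Set.InjOn α (Set.Iio h)) (hβ : Set.InjOn β (Set.Iio w))
    {R : MvPolynomial (Fin n ⊕ Fin n) ℚ} (hR : R.totalDegree ≤ d)
    (hvan : ∀ T : Fin n → ℕ × ℕ, Function.Injective T → (∀ m, T m ∈ F) →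
      (∀ c ∈ F, c ∉ Set.range T → c ∈ shadowF F i j) →
      eval (Sum.elim (fun m => α (T m).1) (fun m => β (T m).2)) R = 0) :
    apolar (homogeneousComponent d R) (deltaOfFinset n D) = 0 := by
  by_cases hD : D.card = n
  swap
  · simp [deltaOfFinset, hD, apolar]
  obtain ⟨L, hL, hLD, hΔ⟩ := exists_deltaOfFinset_eq_deltaOfList hD
  have hLF : ∀ i, L i ∈ F := fun i => hDF (mem_coe.1 (hLD ▸ Set.mem_range_self i))
  rw [hΔ, apolar_homogeneousComponent (isHomogeneous_deltaOfList L)]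
  split_ifs with hd
  swap
  · rfl
  rw [apolar_deltaOfList L hα hβ (fun i => hFbox _ (hLF i)) (hd ▸ hR), sum_eq_zero, mul_zero]
  intro z _
  by_cases hdet : (nodeMatrix L α β z).det = 0
  · rw [hdet, zero_mul]
  set T : Fin n → ℕ × ℕ := fun m => (z (Sum.inl m), z (Sum.inr m))
  have hT : Function.Injective T := injective_of_det_nodeMatrix_ne_zero hdet
  obtain ⟨s, hs⟩ := exists_perm_le_of_det_nodeMatrix_ne_zero hdet
  have hTF : ∀ m, T m ∈ F := fun m => by
    simpa using hF (hs (s.symm m)) (mem_coe.2 (hLF (s.symm m)))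
  have hrange := subset_range_of_le_perm (isLowerSet_sdiff_shadowF hF i j) hL hT
    (fun c hc => hLD ▸ mem_coe.2 (hFD hc)) s hs
  have hcompl : ∀ c ∈ F, c ∉ Set.range T → c ∈ shadowF F i j := fun c hc hcT => by
    by_contra hsh
    exact hcT (hrange c (mem_sdiff.2 ⟨hc, hsh⟩))
  have hpoint : (fun v => Sum.elim (fun _ => α) (fun _ => β) v (z v))
      = Sum.elim (fun m => α (T m).1) (fun m => β (T m).2) := by
    funext v
    cases v <;> rfl
  rw [hpoint, hvan T hT hTF hcompl, mul_zero]

theorem monomial_mul_homogeneousComponent {σ R : Type*} [CommSemiring R] (e : σ →₀ ℕ) (d : ℕ)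
    (P : MvPolynomial σ R) :
    monomial e (1 : R) * homogeneousComponent d P
      = homogeneousComponent (d + e.degree) (monomial e 1 * P) := by
  ext a
  rw [coeff_monomial_mul', coeff_homogeneousComponent, coeff_homogeneousComponent,
    coeff_monomial_mul']
  by_cases hle : e ≤ a
  · have hdeg : a.degree = (a - e).degree + e.degree := by
      rw [← map_add, tsub_add_cancel_of_le hle]
    simp only [hle, if_true, hdeg, Nat.add_right_cancel_iff, one_mul]
  · simp only [hle, if_false, ite_self]

theorem statement9_general (n k h i j : ℕ) (μ : ℕ → ℕ)
    (hanti : Antitone μ)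
    (α β : ℕ → ℚ) (hα : Set.InjOn α (Set.Iio h)) (hβ : Set.InjOn β (Set.Iio (μ 0)))
    (P : MvPolynomial (Fin n ⊕ Fin n) ℚ)
    (hvan : ∀ T : Fin n → ℕ × ℕ, Function.Injective T →
      (∀ m, T m ∈ ferrers h μ) →
      (∀ c ∈ ferrers h μ, c ∉ Set.range T → c ∈ shadowF (ferrers h μ) i j) →
      MvPolynomial.eval
        (Sum.elim (fun m : Fin n => α (T m).1) (fun m : Fin n => β (T m).2)) P = 0) :
    ∀ Q ∈ Mk n k (ferrers h μ) i j,
      applyDiff (MvPolynomial.homogeneousComponent P.totalDegree P) Q = 0 := by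
  suffices Mk n k (ferrers h μ) i j
      ≤ LinearMap.ker (applyDiffLinear (homogeneousComponent P.totalDegree P)) from
    fun Q hQ => by simpa [applyDiffLinear_apply] using this hQ
  refine iSup₂_le fun S hS => Submodule.span_le.2 ?_
  rintro _ ⟨m, rfl⟩
  refine (applyDiffLinear_apply _ _).trans (applyDiff_eq_zero_of_forall_apolar fun c => ?_)
  rw [apolar_monDiff, ← mul_assoc, monomial_mul, one_mul, monomial_mul_homogeneousComponent]
  refine apolar_homogeneousComponent_deltaOfFinset_eq_zero (isLowerSet_ferrers hanti)
    (fun c hc => ?_) sdiff_subset (sdiff_subset_sdiff subset_rfl (mem_powersetCard.1 hS).1)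
    hα hβ ?_ fun T hT hTF hTc => by rw [eval_mul, hvan T hT hTF hTc, mul_zero]
  · simp only [ferrers, mem_filter, mem_product, mem_range] at hc
    exact ⟨hc.1.1, hc.1.2⟩
  · refine (totalDegree_mul _ _).trans_eq ?_
    rw [totalDegree_monomial _ one_ne_zero, add_comm]
    rfl

/-- The inclusion `I^k ⊆ 𝓘` (orbit construction, two alphabets): if `P` vanishes on the
orbit point of every filling of `n` of the cells of `μ` by `1,…,n` whose `k` empty cells
lie in the shadow of `(i,j)`, then `gr(P)(∂)` annihilates `M^k_{i,j}(X,Y)`.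
Here `μ` is a partition of `n + k` with `h` rows and largest part `μ 0`, a filling is an
injective map `T : Fin n → ℕ × ℕ` with values in `μ` whose complement in `μ` lies in
the shadow of `(i,j)`, and the orbit point of `T` is given by `aₘ = α (row of m)`,
`bₘ = β (column of m)` for pairwise distinct `α`'s and `β`'s. -/
theorem statement9 (n k h i j : ℕ) (μ : ℕ → ℕ)
    (hanti : Antitone μ) (hpos : ∀ r, r < h → 0 < μ r) (hzero : ∀ r, h ≤ r → μ r = 0)
    (hcard : (ferrers h μ).card = n + k) (hij : (i, j) ∈ ferrers h μ)
    (α β : ℕ → ℚ) (hα : Set.InjOn α (Set.Iio h)) (hβ : Set.InjOn β (Set.Iio (μ 0)))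
    (P : MvPolynomial (Fin n ⊕ Fin n) ℚ)
    (hvan : ∀ T : Fin n → ℕ × ℕ, Function.Injective T →
      (∀ m, T m ∈ ferrers h μ) →
      (∀ c ∈ ferrers h μ, c ∉ Set.range T → c ∈ shadowF (ferrers h μ) i j) →
      MvPolynomial.eval
        (Sum.elim (fun m : Fin n => α (T m).1) (fun m : Fin n => β (T m).2)) P = 0) :
    ∀ Q ∈ Mk n k (ferrers h μ) i j,
      applyDiff (MvPolynomial.homogeneousComponent P.totalDegree P) Q = 0 :=
  statement9_general n k h i j μ hanti α β hα hβ P hvan
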